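/- arXiv:2510.17717 — 2 statements merged into one kernel-verified Lean document; each statement's English description precedes it below -/
import Mathlib

section
/- Let R, K be positive integers, let γ ∈ (0,1] satisfy 2γK ≥ 1, and let ε ≥ 0. Let μ be a probability distribution on ({0,1}^K)^R whose support T satisfies |T| ≥ 2^{(1−γ)RK} and μ(x) ≤ (1+ε)/|T| for every x ∈ T. For σ = (σ_1,…,σ_R) ∈ [K]^R let χ_σ(x) := (−1)^{∑_{r=1}^R x_r(σ_r)}. Then for σ chosen uniformly at random from [K]^R, Pr_σ[ | E_{x∼μ}[ χ_σ(x) ] | ≥ (8γ)^{R/2} ] ≤ (1+ε)^2 · 2^{−R}. -/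
noncomputable section
open scoped Classical
open Finset

/-- The character selecting one coordinate per block:
`χ_σ(x) = (-1)^{∑_r x_r(σ_r)}` for `x ∈ ({0,1}^K)^R` and a selector `σ ∈ [K]^R`. -/
def chiSel {R K : ℕ} (σ : Fin R → Fin K) (x : Fin R → Fin K → Bool) : ℝ :=
  ∏ r, (if x r (σ r) then (-1 : ℝ) else 1)

namespace Stmt10Aux

def sg (b : Bool) : ℝ := if b then -1 else 1

lemma sg_mul_self (b : Bool) : sg b * sg b = 1 := by cases b <;> simp [sg]

lemma sg_neg_flip (b : Bool) : sg (!b) = - sg b := by cases b <;> simp [sg]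

variable {ι : Type*} [Fintype ι] [DecidableEq ι]

/-- flip involution sum identity -/
lemma sum_flip (a : ι) (f : (ι → Bool) → ℝ) :
    ∑ z : ι → Bool, f z = ∑ z : ι → Bool, f (Function.update z a (!(z a))) := by
  have hinv : Function.Involutive (fun z : ι → Bool => Function.update z a (!(z a))) := by
    intro z
    funext i
    by_cases h : i = a
    · subst h; simp [Function.update_self]
    · simp [Function.update_of_ne h]
  exact (Equiv.sum_comp hinv.toPerm f).symm

lemma sum_sg_pair (a : ι) (Φ : ℝ → ℝ → ℝ) (u v : (ι → Bool) → ℝ)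
    (hu : ∀ z b, u (Function.update z a b) = u z)
    (hv : ∀ z b, v (Function.update z a b) = v z) :
    2 * ∑ z : ι → Bool, Φ (u z) (sg (z a) * v z)
      = ∑ z : ι → Bool, (Φ (u z) (v z) + Φ (u z) (-v z)) := by
  have h1 := sum_flip a (fun z => Φ (u z) (sg (z a) * v z))
  have h2 : ∀ z : ι → Bool,
      Φ (u (Function.update z a (!(z a)))) (sg ((Function.update z a (!(z a))) a)
        * v (Function.update z a (!(z a))))
      = Φ (u z) (-(sg (z a)) * v z) := by
    intro z
    rw [hu, hv, Function.update_self, sg_neg_flip]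
  rw [Finset.sum_congr rfl (fun z _ => h2 z)] at h1
  rw [two_mul]
  nth_rewrite 2 [h1]
  rw [← Finset.sum_add_distrib]
  refine Finset.sum_congr rfl fun z _ => ?_
  cases h : z a <;> simp [sg, h] <;> ring


def chiF (S : Finset ι) (z : ι → Bool) : ℝ := ∏ i ∈ S, sg (z i)

lemma chiF_update {S : Finset ι} {a : ι} (ha : a ∉ S) (z : ι → Bool) (b : Bool) :
    chiF S (Function.update z a b) = chiF S z :=
  Finset.prod_congr rfl fun i hi => by
    rw [Function.update_of_ne (by rintro rfl; exact ha hi)]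

def Fn (s : Finset ι) (c : Finset ι → ℝ) (z : ι → Bool) : ℝ :=
  ∑ S ∈ s.powerset, c S * chiF S z

lemma Fn_update {s : Finset ι} {a : ι} (ha : a ∉ s) (c : Finset ι → ℝ)
    (z : ι → Bool) (b : Bool) :
    Fn s c (Function.update z a b) = Fn s c z :=
  Finset.sum_congr rfl fun S hS => by
    rw [chiF_update (fun haS => ha ((Finset.mem_powerset.1 hS) haS)) z b]

lemma Fn_insert {s : Finset ι} {a : ι} (ha : a ∉ s) (c : Finset ι → ℝ) (z : ι → Bool) :
    Fn (insert a s) c z = Fn s c z + sg (z a) * Fn s (fun S => c (insert a S)) z := by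
  unfold Fn
  rw [Finset.sum_powerset_insert ha]
  congr 1
  rw [Finset.mul_sum]
  refine Finset.sum_congr rfl fun S hS => ?_
  have haS : a ∉ S := fun haS => ha ((Finset.mem_powerset.1 hS) haS)
  simp only [chiF, Finset.prod_insert haS]
  ring

/-- reindex even terms -/
lemma sum_even_reindex (q : ℕ) (w : ℕ → ℝ) :
    ∑ k ∈ Finset.range (2*q+1), (if Even k then w k else 0)
      = ∑ i ∈ Finset.range (q+1), w (2*i) := by
  rw [← Finset.sum_filter]
  refine (Finset.sum_nbij' (fun i => 2*i) (fun k => k / 2) ?_ ?_ ?_ ?_ ?_).symm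
  · intro a ha
    simp only [Finset.mem_range] at ha
    simp only [Finset.mem_filter, Finset.mem_range]
    exact ⟨by omega, even_two_mul a⟩
  · intro k hk
    simp only [Finset.mem_filter, Finset.mem_range] at hk
    simp only [Finset.mem_range]
    omega
  · intro a _
    show 2*a/2 = a
    omega
  · intro k hk
    simp only [Finset.mem_filter, Finset.mem_range, Nat.even_iff] at hk
    show 2*(k/2) = k
    omega
  · intro a _
    rfl

/-- `(A+B)^{2q} + (A-B)^{2q} = 2 ∑ C(2q,2i) A^{2i} B^{2q-2i}` -/
lemma pm_pow (q : ℕ) (A B : ℝ) :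
    (A + B) ^ (2*q) + (A - B) ^ (2*q)
      = 2 * ∑ i ∈ Finset.range (q+1),
          ((2*q).choose (2*i) : ℝ) * (A ^ (2*i) * B ^ (2*q - 2*i)) := by
  rw [sub_eq_add_neg, add_pow, add_pow, ← Finset.sum_add_distrib]
  have h : ∀ k ∈ Finset.range (2*q+1),
      A ^ k * B ^ (2*q - k) * ((2*q).choose k : ℝ)
        + A ^ k * (-B) ^ (2*q - k) * ((2*q).choose k : ℝ)
      = if Even k then
          2 * (((2*q).choose k : ℝ) * (A ^ k * B ^ (2*q-k))) else 0 := by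
    intro k hk
    simp only [Finset.mem_range] at hk
    have heq : Even (2*q - k) ↔ Even k := by
      rw [Nat.even_sub (by omega)]
      simp [Nat.even_iff]
    by_cases he : Even k
    · rw [if_pos he, (heq.2 he).neg_pow]; ring
    · rw [if_neg he,
        (Nat.not_even_iff_odd.1 (fun hc => he (heq.1 hc))).neg_pow]
      ring
  rw [Finset.sum_congr rfl h, sum_even_reindex q
    (fun k => 2 * (((2*q).choose k : ℝ) * (A ^ k * B ^ (2*q - k)))),
    Finset.mul_sum]


lemma choose_le (q : ℕ) (hq : 1 ≤ q) : ∀ i : ℕ,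
    ((2*q).choose (2*i)) ≤ q.choose i * (2*q)^i := by
  intro i
  induction i with
  | zero => simp
  | succ i ih =>
    by_cases hiq : i < q
    · -- multiply by (2i+2)(2i+1)
      have key1 : (2*q).choose (2*(i+1)) * ((2*i+2) * (2*i+1))
          = (2*q).choose (2*i) * ((2*q - 2*i) * (2*q - (2*i+1))) := by
        have e1 : (2*q).choose (2*i+2) * (2*i+2) = (2*q).choose (2*i+1) * (2*q - (2*i+1)) :=
          Nat.choose_succ_right_eq (2*q) (2*i+1)
        have e2 : (2*q).choose (2*i+1) * (2*i+1) = (2*q).choose (2*i) * (2*q - 2*i) :=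
          Nat.choose_succ_right_eq (2*q) (2*i)
        have : 2*(i+1) = 2*i+2 := by ring
        rw [this]
        calc (2*q).choose (2*i+2) * ((2*i+2) * (2*i+1))
            = ((2*q).choose (2*i+2) * (2*i+2)) * (2*i+1) := by ring
          _ = ((2*q).choose (2*i+1) * (2*q - (2*i+1))) * (2*i+1) := by rw [e1]
          _ = ((2*q).choose (2*i+1) * (2*i+1)) * (2*q - (2*i+1)) := by ring
          _ = ((2*q).choose (2*i) * (2*q - 2*i)) * (2*q - (2*i+1)) := by rw [e2]
          _ = _ := by ring
      have key2 : q.choose (i+1) * (i+1) = q.choose i * (q - i) :=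
        Nat.choose_succ_right_eq q i
      have hpos : 0 < (2*i+2) * (2*i+1) := by positivity
      refine Nat.le_of_mul_le_mul_right ?_ hpos
      rw [key1]
      calc (2*q).choose (2*i) * ((2*q - 2*i) * (2*q - (2*i+1)))
          ≤ (q.choose i * (2*q)^i) * ((2*q - 2*i) * (2*q - (2*i+1))) :=
            Nat.mul_le_mul_right _ ih
        _ ≤ (q.choose i * (2*q)^i) * ((2*(q - i)) * ((2*i+1) * (2*q))) := by
            refine Nat.mul_le_mul_left _ ?_
            refine Nat.mul_le_mul (by omega) ?_
            calc 2*q - (2*i+1) ≤ 2*q := by omega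
              _ ≤ (2*i+1) * (2*q) := Nat.le_mul_of_pos_left _ (by omega)
        _ = (q.choose i * (q - i)) * ((2*q)^(i+1)) * (2*(2*i+1)) := by ring
        _ = (q.choose (i+1) * (i+1)) * ((2*q)^(i+1)) * (2*(2*i+1)) := by rw [key2]
        _ = q.choose (i+1) * (2*q)^(i+1) * ((2*i+2) * (2*i+1)) := by ring
    · have h1 : q < i + 1 := by omega
      have h2 : 2*q < 2*(i+1) := by omega
      rw [Nat.choose_eq_zero_of_lt h2]
      exact Nat.zero_le _

lemma holder_pow {α : Type*} (s : Finset α) (u v : α → ℝ)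
    (hu : ∀ x ∈ s, 0 ≤ u x) (hv : ∀ x ∈ s, 0 ≤ v x)
    (q i : ℕ) (hi : i ≤ q) (hq : 0 < q) :
    (∑ x ∈ s, u x ^ (q - i) * v x ^ i) ^ q
      ≤ (∑ x ∈ s, u x ^ q) ^ (q-i) * (∑ x ∈ s, v x ^ q) ^ i := by
  rcases Nat.eq_zero_or_pos i with hi0 | hipos
  · subst hi0
    simp
  rcases eq_or_lt_of_le hi with hiq | hilt
  · subst hiq
    simp
  -- 0 < i < q
  set p1 : ℝ := (q : ℝ) / ((q : ℝ) - i) with hp1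
  set p2 : ℝ := (q : ℝ) / (i : ℝ) with hp2
  have hqR : (0:ℝ) < q := by exact_mod_cast hq
  have hiR : (0:ℝ) < i := by exact_mod_cast hipos
  have hqiR : (0:ℝ) < (q:ℝ) - i := by
    have : (i:ℝ) < q := by exact_mod_cast hilt
    linarith
  have hconj : p1.HolderConjugate p2 := by
    rw [Real.holderConjugate_iff]
    constructor
    · rw [hp1, lt_div_iff₀ hqiR]; linarith
    · rw [hp1, hp2]
      field_simp
      ring
  have H := Real.inner_le_Lp_mul_Lq_of_nonneg s hconj
      (f := fun x => u x ^ (q-i)) (g := fun x => v x ^ i)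
      (fun x hx => pow_nonneg (hu x hx) _) (fun x hx => pow_nonneg (hv x hx) _)
  -- convert rpow sums
  have hcast : ((q-i : ℕ) : ℝ) = (q:ℝ) - i := by
    rw [Nat.cast_sub hi]
  have e1 : ∀ x ∈ s, (u x ^ (q-i) : ℝ) ^ p1 = u x ^ q := by
    intro x hx
    rw [← Real.rpow_natCast (u x) (q-i), ← Real.rpow_natCast (u x) q,
      ← Real.rpow_mul (hu x hx)]
    congr 1
    rw [hcast, hp1]
    field_simp
  have e2 : ∀ x ∈ s, (v x ^ i : ℝ) ^ p2 = v x ^ q := by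
    intro x hx
    rw [← Real.rpow_natCast (v x) i, ← Real.rpow_natCast (v x) q,
      ← Real.rpow_mul (hv x hx)]
    congr 1
    rw [hp2]
    field_simp
  rw [Finset.sum_congr rfl e1, Finset.sum_congr rfl e2] at H
  -- now (∑ uvterm) ≤ SU ^ (1/p1) * SV ^ (1/p2); raise to q
  have hsum_nonneg : 0 ≤ ∑ x ∈ s, u x ^ (q - i) * v x ^ i :=
    Finset.sum_nonneg fun x hx => mul_nonneg (pow_nonneg (hu x hx) _) (pow_nonneg (hv x hx) _)
  have hSU : 0 ≤ ∑ x ∈ s, u x ^ q := Finset.sum_nonneg fun x hx => pow_nonneg (hu x hx) _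
  have hSV : 0 ≤ ∑ x ∈ s, v x ^ q := Finset.sum_nonneg fun x hx => pow_nonneg (hv x hx) _
  calc (∑ x ∈ s, u x ^ (q - i) * v x ^ i) ^ q
      ≤ ((∑ x ∈ s, u x ^ q) ^ (1/p1) * (∑ x ∈ s, v x ^ q) ^ (1/p2)) ^ q := by
        apply pow_le_pow_left₀ hsum_nonneg H
    _ = (∑ x ∈ s, u x ^ q) ^ (q-i) * (∑ x ∈ s, v x ^ q) ^ i := by
        rw [mul_pow, ← Real.rpow_natCast ((∑ x ∈ s, u x ^ q) ^ (1/p1)) q,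
          ← Real.rpow_natCast ((∑ x ∈ s, v x ^ q) ^ (1/p2)) q,
          ← Real.rpow_mul hSU, ← Real.rpow_mul hSV]
        rw [← Real.rpow_natCast (∑ x ∈ s, u x ^ q) (q-i),
          ← Real.rpow_natCast (∑ x ∈ s, v x ^ q) i]
        congr 1
        · congr 1
          rw [hcast, hp1]
          field_simp
        · congr 1
          rw [hp2]
          field_simp


/-- Even-moment hypercontractivity for multilinear polynomials on the Boolean cube. -/
theorem hyper (q : ℕ) (hq : 1 ≤ q) (s : Finset ι) :
    ∀ (d : ℕ) (c : Finset ι → ℝ),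
      (∀ S ∈ s.powerset, d < S.card → c S = 0) →
      (∑ z : ι → Bool, (Fn s c z) ^ (2*q)) * ((2:ℝ) ^ (Fintype.card ι)) ^ (q-1)
        ≤ ((2*q:ℝ) ^ d * ∑ z : ι → Bool, (Fn s c z)^2) ^ q := by
  induction s using Finset.induction_on with
  | empty =>
    intro d c _
    have hFn : ∀ z : ι → Bool, Fn ∅ c z = c ∅ := by
      intro z
      simp [Fn, chiF]
    simp only [hFn]
    rw [Finset.sum_const, Finset.sum_const, Finset.card_univ]
    have hcard : Fintype.card (ι → Bool) = 2 ^ (Fintype.card ι) := by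
      simp [Fintype.card_fun]
    rw [hcard]
    push_cast
    rw [nsmul_eq_mul, nsmul_eq_mul]
    push_cast
    have h2N : (0:ℝ) ≤ (2:ℝ) ^ (Fintype.card ι) := by positivity
    have hNN : (2:ℝ) ^ (Fintype.card ι) * ((2:ℝ) ^ (Fintype.card ι)) ^ (q-1)
        = ((2:ℝ) ^ (Fintype.card ι)) ^ q := by
      rw [← pow_succ']
      congr 1
      omega
    calc (2:ℝ) ^ (Fintype.card ι) * c ∅ ^ (2*q) * ((2:ℝ) ^ (Fintype.card ι)) ^ (q-1)
        = ((2:ℝ) ^ (Fintype.card ι) * c ∅ ^ 2) ^ q := by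
          rw [mul_pow, pow_mul, ← hNN]
          ring
      _ ≤ ((2*q:ℝ) ^ d * ((2:ℝ) ^ (Fintype.card ι) * c ∅ ^ 2)) ^ q := by
          apply pow_le_pow_left₀ (by positivity)
          nth_rewrite 1 [← one_mul ((2:ℝ) ^ (Fintype.card ι) * c ∅ ^ 2)]
          apply mul_le_mul_of_nonneg_right ?_ (by positivity)
          apply one_le_pow₀
          have : (1:ℝ) ≤ q := by exact_mod_cast hq
          linarith
      _ = ((2*q:ℝ) ^ d * ((2:ℝ) ^ (Fintype.card ι) * c ∅ ^ 2)) ^ q := rfl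
  | insert _ _ ha ih =>
    rename_i a s2
    intro d c hdeg
    have hdeg_g : ∀ S ∈ s2.powerset, d < S.card → c S = 0 := by
      intro S hS hSd
      exact hdeg S (Finset.mem_powerset.2
        ((Finset.mem_powerset.1 hS).trans (Finset.subset_insert a s2))) hSd
    have hdec : ∀ z : ι → Bool, Fn (insert a s2) c z
        = Fn s2 c z + sg (z a) * Fn s2 (fun S => c (insert a S)) z :=
      fun z => Fn_insert ha c z
    have hginv : ∀ (z : ι → Bool) b, Fn s2 c (Function.update z a b) = Fn s2 c z :=
      fun z b => Fn_update ha c z b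
    have hhinv : ∀ (z : ι → Bool) b,
        Fn s2 (fun S => c (insert a S)) (Function.update z a b)
          = Fn s2 (fun S => c (insert a S)) z :=
      fun z b => Fn_update ha _ z b
    have hA0 : 0 ≤ ∑ z : ι → Bool, (Fn s2 c z)^2 :=
      Finset.sum_nonneg fun z _ => sq_nonneg _
    have hB0 : 0 ≤ ∑ z : ι → Bool, (Fn s2 (fun S => c (insert a S)) z)^2 :=
      Finset.sum_nonneg fun z _ => sq_nonneg _
    have hF2 : ∑ z : ι → Bool, (Fn (insert a s2) c z)^2
        = (∑ z : ι → Bool, (Fn s2 c z)^2)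
          + ∑ z : ι → Bool, (Fn s2 (fun S => c (insert a S)) z)^2 := by
      have hp := sum_sg_pair a (fun x y => (x+y)^2) (Fn s2 c)
        (Fn s2 (fun S => c (insert a S))) hginv hhinv
      have e1 : ∀ z : ι → Bool,
          ((Fn s2 c z + Fn s2 (fun S => c (insert a S)) z)^2
            + (Fn s2 c z + -(Fn s2 (fun S => c (insert a S)) z))^2)
          = 2*((Fn s2 c z)^2 + (Fn s2 (fun S => c (insert a S)) z)^2) := by
        intro z; ring
      rw [Finset.sum_congr rfl (fun z _ => e1 z), ← Finset.mul_sum,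
        Finset.sum_add_distrib] at hp
      have e2 : (∑ z : ι → Bool, (Fn (insert a s2) c z)^2)
          = ∑ z : ι → Bool,
              (Fn s2 c z + sg (z a) * Fn s2 (fun S => c (insert a S)) z)^2 :=
        Finset.sum_congr rfl (fun z _ => by rw [hdec z])
      rw [e2]
      linarith [hp]
    rcases Nat.eq_zero_or_pos d with hd0 | hdpos
    · -- degree 0 : the h-part vanishes
      subst hd0
      have hzero : ∀ z : ι → Bool, Fn s2 (fun S => c (insert a S)) z = 0 := by
        intro z
        apply Finset.sum_eq_zero
        intro S hS
        have hc0 : c (insert a S) = 0 := by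
          apply hdeg (insert a S)
          · exact Finset.mem_powerset.2
              (Finset.insert_subset_insert a (Finset.mem_powerset.1 hS))
          · rw [Finset.card_insert_of_notMem
              (fun haS => ha ((Finset.mem_powerset.1 hS) haS))]
            omega
        show c (insert a S) * chiF S z = 0
        rw [hc0, zero_mul]
      have hFg : ∀ z : ι → Bool, Fn (insert a s2) c z = Fn s2 c z :=
        fun z => by rw [hdec z, hzero z, mul_zero, add_zero]
      have eq1 : (∑ z : ι → Bool, (Fn (insert a s2) c z)^(2*q))
          = ∑ z : ι → Bool, (Fn s2 c z)^(2*q) :=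
        Finset.sum_congr rfl fun z _ => by rw [hFg z]
      have eq2 : (∑ z : ι → Bool, (Fn (insert a s2) c z)^2)
          = ∑ z : ι → Bool, (Fn s2 c z)^2 :=
        Finset.sum_congr rfl fun z _ => by rw [hFg z]
      rw [eq1, eq2]
      exact ih 0 c hdeg_g
    · obtain ⟨e, rfl⟩ : ∃ e, d = e + 1 := ⟨d - 1, by omega⟩
      have hdeg_h : ∀ S ∈ s2.powerset, e < S.card → c (insert a S) = 0 := by
        intro S hS hSe
        apply hdeg (insert a S)
        · exact Finset.mem_powerset.2
            (Finset.insert_subset_insert a (Finset.mem_powerset.1 hS))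
        · rw [Finset.card_insert_of_notMem
            (fun haS => ha ((Finset.mem_powerset.1 hS) haS))]
          omega
      have HCg := ih (e+1) c hdeg_g
      have HCh := ih e (fun S => c (insert a S)) hdeg_h
      -- the binomial expansion of the (2q)-th power sum
      have hexp : ∑ z : ι → Bool, (Fn (insert a s2) c z)^(2*q)
          = ∑ i ∈ Finset.range (q+1), ((2*q).choose (2*i) : ℝ)
              * ∑ z : ι → Bool, ((Fn s2 (fun S => c (insert a S)) z) ^ (2*i)
                  * (Fn s2 c z) ^ (2*q - 2*i)) := by
        have hp := sum_sg_pair a (fun x y => (x+y)^(2*q)) (Fn s2 c)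
          (Fn s2 (fun S => c (insert a S))) hginv hhinv
        have e1 : ∀ z : ι → Bool,
            ((Fn s2 c z + Fn s2 (fun S => c (insert a S)) z)^(2*q)
              + (Fn s2 c z + -(Fn s2 (fun S => c (insert a S)) z))^(2*q))
            = 2 * ∑ i ∈ Finset.range (q+1), ((2*q).choose (2*i) : ℝ)
                * ((Fn s2 (fun S => c (insert a S)) z) ^ (2*i)
                    * (Fn s2 c z) ^ (2*q - 2*i)) := by
          intro z
          have hpm := pm_pow q (Fn s2 (fun S => c (insert a S)) z) (Fn s2 c z)
          calc (Fn s2 c z + Fn s2 (fun S => c (insert a S)) z)^(2*q)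
                + (Fn s2 c z + -(Fn s2 (fun S => c (insert a S)) z))^(2*q)
              = (Fn s2 (fun S => c (insert a S)) z + Fn s2 c z)^(2*q)
                + (Fn s2 (fun S => c (insert a S)) z - Fn s2 c z)^(2*q) := by
                rw [add_comm (Fn s2 c z) (Fn s2 (fun S => c (insert a S)) z)]
                congr 1
                rw [show Fn s2 c z + -(Fn s2 (fun S => c (insert a S)) z)
                    = -(Fn s2 (fun S => c (insert a S)) z - Fn s2 c z) from by ring,
                  Even.neg_pow (even_two_mul q)]
            _ = _ := hpm
        rw [Finset.sum_congr rfl (fun z _ => e1 z), ← Finset.mul_sum] at hp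
        have e2 : (∑ z : ι → Bool, (Fn (insert a s2) c z)^(2*q))
            = ∑ z : ι → Bool,
                (Fn s2 c z + sg (z a) * Fn s2 (fun S => c (insert a S)) z)^(2*q) :=
          Finset.sum_congr rfl (fun z _ => by rw [hdec z])
        rw [e2]
        have hcancel := mul_left_cancel₀ (two_ne_zero' ℝ) hp
        rw [hcancel, Finset.sum_comm]
        exact Finset.sum_congr rfl fun i _ => by rw [Finset.mul_sum]
      -- per-term bound
      have hterm : ∀ i ∈ Finset.range (q+1),
          ((2*q).choose (2*i) : ℝ)
            * (∑ z : ι → Bool, ((Fn s2 (fun S => c (insert a S)) z) ^ (2*i)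
                * (Fn s2 c z) ^ (2*q - 2*i)))
            * ((2:ℝ) ^ (Fintype.card ι)) ^ (q-1)
          ≤ ((2*q:ℝ)^(e+1) * ∑ z : ι → Bool, (Fn s2 (fun S => c (insert a S)) z)^2)^i
            * ((2*q:ℝ)^(e+1) * ∑ z : ι → Bool, (Fn s2 c z)^2)^(q-i)
            * ((q.choose i : ℕ) : ℝ) := by
        intro i hi
        simp only [Finset.mem_range] at hi
        have hiq : i ≤ q := by omega
        have hP0 : (0:ℝ) ≤ ((2:ℝ) ^ (Fintype.card ι)) ^ (q-1) := by positivity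
        have hTi : (∑ z : ι → Bool, ((Fn s2 (fun S => c (insert a S)) z) ^ (2*i)
                * (Fn s2 c z) ^ (2*q - 2*i)))
            = ∑ z : ι → Bool, ((Fn s2 c z)^2) ^ (q-i)
                * ((Fn s2 (fun S => c (insert a S)) z)^2) ^ i := by
          refine Finset.sum_congr rfl fun z _ => ?_
          rw [← pow_mul, ← pow_mul, show 2*(q-i) = 2*q - 2*i from by omega]
          ring
        have hold := holder_pow Finset.univ (fun z : ι → Bool => (Fn s2 c z)^2)
          (fun z => (Fn s2 (fun S => c (insert a S)) z)^2)
          (fun z _ => sq_nonneg _) (fun z _ => sq_nonneg _) q i hiq hq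
        have hg2q : (∑ z : ι → Bool, ((Fn s2 c z)^2)^q)
            = ∑ z : ι → Bool, (Fn s2 c z)^(2*q) :=
          Finset.sum_congr rfl fun z _ => (pow_mul _ 2 q).symm
        have hh2q : (∑ z : ι → Bool, ((Fn s2 (fun S => c (insert a S)) z)^2)^q)
            = ∑ z : ι → Bool, (Fn s2 (fun S => c (insert a S)) z)^(2*q) :=
          Finset.sum_congr rfl fun z _ => (pow_mul _ 2 q).symm
        rw [hg2q, hh2q] at hold
        have hSG0 : (0:ℝ) ≤ ∑ z : ι → Bool, (Fn s2 c z)^(2*q) := by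
          rw [← hg2q]
          exact Finset.sum_nonneg fun z _ => pow_nonneg (sq_nonneg _) _
        have hSH0 : (0:ℝ) ≤ ∑ z : ι → Bool, (Fn s2 (fun S => c (insert a S)) z)^(2*q) := by
          rw [← hh2q]
          exact Finset.sum_nonneg fun z _ => pow_nonneg (sq_nonneg _) _
        have hTT0 : (0:ℝ) ≤ ∑ z : ι → Bool, ((Fn s2 c z)^2) ^ (q-i)
            * ((Fn s2 (fun S => c (insert a S)) z)^2) ^ i :=
          Finset.sum_nonneg fun z _ =>
            mul_nonneg (pow_nonneg (sq_nonneg _) _) (pow_nonneg (sq_nonneg _) _)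
        have hX0 : (0:ℝ) ≤ (2*(q:ℝ))^(e+1) * ∑ z : ι → Bool, (Fn s2 c z)^2 := by
          have : (0:ℝ) ≤ (2*(q:ℝ))^(e+1) := by positivity
          exact mul_nonneg this hA0
        have hY0 : (0:ℝ) ≤ (2*(q:ℝ))^e
            * ∑ z : ι → Bool, (Fn s2 (fun S => c (insert a S)) z)^2 := by
          have : (0:ℝ) ≤ (2*(q:ℝ))^e := by positivity
          exact mul_nonneg this hB0
        have hTP : (∑ z : ι → Bool, ((Fn s2 c z)^2) ^ (q-i)
              * ((Fn s2 (fun S => c (insert a S)) z)^2) ^ i)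
              * ((2:ℝ) ^ (Fintype.card ι)) ^ (q-1)
            ≤ ((2*(q:ℝ))^(e+1) * ∑ z : ι → Bool, (Fn s2 c z)^2)^(q-i)
              * ((2*(q:ℝ))^e * ∑ z : ι → Bool, (Fn s2 (fun S => c (insert a S)) z)^2)^i := by
          have hq0 : q ≠ 0 := by omega
          refine le_of_pow_le_pow_left₀ hq0 (mul_nonneg (pow_nonneg hX0 _) (pow_nonneg hY0 _)) ?_
          calc ((∑ z : ι → Bool, ((Fn s2 c z)^2) ^ (q-i)
                  * ((Fn s2 (fun S => c (insert a S)) z)^2) ^ i)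
                * ((2:ℝ) ^ (Fintype.card ι)) ^ (q-1))^q
              = (∑ z : ι → Bool, ((Fn s2 c z)^2) ^ (q-i)
                  * ((Fn s2 (fun S => c (insert a S)) z)^2) ^ i)^q
                * ((((2:ℝ) ^ (Fintype.card ι)) ^ (q-1))^(q-i)
                  * (((2:ℝ) ^ (Fintype.card ι)) ^ (q-1))^i) := by
                rw [mul_pow, ← pow_add, show q - i + i = q from by omega]
            _ ≤ ((∑ z : ι → Bool, (Fn s2 c z)^(2*q))^(q-i)
                  * (∑ z : ι → Bool, (Fn s2 (fun S => c (insert a S)) z)^(2*q))^i)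
                * ((((2:ℝ) ^ (Fintype.card ι)) ^ (q-1))^(q-i)
                  * (((2:ℝ) ^ (Fintype.card ι)) ^ (q-1))^i) :=
                mul_le_mul_of_nonneg_right hold (by positivity)
            _ = ((∑ z : ι → Bool, (Fn s2 c z)^(2*q)) * ((2:ℝ) ^ (Fintype.card ι)) ^ (q-1))^(q-i)
                * ((∑ z : ι → Bool, (Fn s2 (fun S => c (insert a S)) z)^(2*q))
                    * ((2:ℝ) ^ (Fintype.card ι)) ^ (q-1))^i := by
                ring
            _ ≤ (((2*(q:ℝ))^(e+1) * ∑ z : ι → Bool, (Fn s2 c z)^2)^q)^(q-i)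
                * (((2*(q:ℝ))^e * ∑ z : ι → Bool, (Fn s2 (fun S => c (insert a S)) z)^2)^q)^i := by
                refine mul_le_mul (pow_le_pow_left₀ (mul_nonneg hSG0 hP0) HCg _)
                  (pow_le_pow_left₀ (mul_nonneg hSH0 hP0) HCh _)
                  (pow_nonneg (mul_nonneg hSH0 hP0) _) (pow_nonneg (pow_nonneg hX0 _) _)
            _ = (((2*(q:ℝ))^(e+1) * ∑ z : ι → Bool, (Fn s2 c z)^2)^(q-i)
                * ((2*(q:ℝ))^e * ∑ z : ι → Bool, (Fn s2 (fun S => c (insert a S)) z)^2)^i)^q := by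
                ring
        have hC : ((2*q).choose (2*i) : ℝ) ≤ ((q.choose i : ℕ) : ℝ) * (2*(q:ℝ))^i := by
          calc ((2*q).choose (2*i) : ℝ) ≤ ((q.choose i * (2*q)^i : ℕ) : ℝ) := by
                exact_mod_cast choose_le q hq i
            _ = _ := by push_cast; ring
        calc ((2*q).choose (2*i) : ℝ)
              * (∑ z : ι → Bool, ((Fn s2 (fun S => c (insert a S)) z) ^ (2*i)
                  * (Fn s2 c z) ^ (2*q - 2*i)))
              * ((2:ℝ) ^ (Fintype.card ι)) ^ (q-1)
            = ((2*q).choose (2*i) : ℝ)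
              * ((∑ z : ι → Bool, ((Fn s2 c z)^2) ^ (q-i)
                  * ((Fn s2 (fun S => c (insert a S)) z)^2) ^ i)
                * ((2:ℝ) ^ (Fintype.card ι)) ^ (q-1)) := by
              rw [hTi]; ring
          _ ≤ (((q.choose i : ℕ) : ℝ) * (2*(q:ℝ))^i)
              * (((2*(q:ℝ))^(e+1) * ∑ z : ι → Bool, (Fn s2 c z)^2)^(q-i)
                * ((2*(q:ℝ))^e * ∑ z : ι → Bool, (Fn s2 (fun S => c (insert a S)) z)^2)^i) := by
              refine mul_le_mul hC hTP (mul_nonneg hTT0 hP0) ?_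
              positivity
          _ = ((2*(q:ℝ))^(e+1) * ∑ z : ι → Bool, (Fn s2 (fun S => c (insert a S)) z)^2)^i
              * ((2*(q:ℝ))^(e+1) * ∑ z : ι → Bool, (Fn s2 c z)^2)^(q-i)
              * ((q.choose i : ℕ) : ℝ) := by
              ring
      calc (∑ z : ι → Bool, (Fn (insert a s2) c z)^(2*q)) * ((2:ℝ) ^ (Fintype.card ι)) ^ (q-1)
          = ∑ i ∈ Finset.range (q+1), ((2*q).choose (2*i) : ℝ)
              * (∑ z : ι → Bool, ((Fn s2 (fun S => c (insert a S)) z) ^ (2*i)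
                  * (Fn s2 c z) ^ (2*q - 2*i)))
              * ((2:ℝ) ^ (Fintype.card ι)) ^ (q-1) := by
            rw [hexp, Finset.sum_mul]
        _ ≤ ∑ i ∈ Finset.range (q+1),
              ((2*q:ℝ)^(e+1) * ∑ z : ι → Bool, (Fn s2 (fun S => c (insert a S)) z)^2)^i
                * ((2*q:ℝ)^(e+1) * ∑ z : ι → Bool, (Fn s2 c z)^2)^(q-i)
                * ((q.choose i : ℕ) : ℝ) :=
            Finset.sum_le_sum hterm
        _ = (((2*q:ℝ)^(e+1) * ∑ z : ι → Bool, (Fn s2 (fun S => c (insert a S)) z)^2)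
              + ((2*q:ℝ)^(e+1) * ∑ z : ι → Bool, (Fn s2 c z)^2))^q := (add_pow _ _ q).symm
        _ = ((2*q:ℝ)^(e+1) * ∑ z : ι → Bool, (Fn (insert a s2) c z)^2)^q := by
            rw [hF2]
            ring_nf


section Application

variable {R K : ℕ}

lemma chiSel_eq_prod_sg (σ : Fin R → Fin K) (x : Fin R → Fin K → Bool) :
    chiSel σ x = ∏ r, sg (x r (σ r)) := rfl

def graphOf (σ : Fin R → Fin K) : Finset (Fin R × Fin K) :=
  Finset.univ.image (fun r => (r, σ r))

lemma graphOf_inj_aux (σ : Fin R → Fin K) :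
    Function.Injective (fun r => (r, σ r)) := by
  intro r r' h
  exact congrArg Prod.fst h

lemma card_graphOf (σ : Fin R → Fin K) : (graphOf σ).card = R := by
  rw [graphOf, Finset.card_image_of_injective _ (graphOf_inj_aux σ), Finset.card_univ,
    Fintype.card_fin]

lemma chiF_graphOf (σ : Fin R → Fin K) (z : Fin R × Fin K → Bool) :
    chiF (graphOf σ) z = chiSel σ (fun r k => z (r,k)) := by
  rw [chiF, graphOf, Finset.prod_image
    (fun r _ r' _ h => graphOf_inj_aux σ h), chiSel_eq_prod_sg]

lemma Fn_graph_sum (w : (Fin R → Fin K) → ℝ) (z : Fin R × Fin K → Bool) :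
    Fn Finset.univ
        (fun S => ∑ σ ∈ Finset.univ.filter (fun σ => graphOf σ = S), w σ) z
      = ∑ σ, w σ * chiSel σ (fun r k => z (r,k)) := by
  rw [Fn, Finset.powerset_univ]
  have e1 : ∀ S ∈ (Finset.univ : Finset (Finset (Fin R × Fin K))),
      (∑ σ ∈ Finset.univ.filter (fun σ => graphOf σ = S), w σ) * chiF S z
        = ∑ σ ∈ Finset.univ.filter (fun σ => graphOf σ = S),
            w σ * chiF (graphOf σ) z := by
    intro S _
    rw [Finset.sum_mul]
    refine Finset.sum_congr rfl fun σ hσ => ?_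
    rw [(Finset.mem_filter.1 hσ).2]
  rw [Finset.sum_congr rfl e1,
    Finset.sum_fiberwise_of_maps_to (fun σ _ => Finset.mem_univ (graphOf σ))]
  exact Finset.sum_congr rfl fun σ _ => by rw [chiF_graphOf]

/-- orthogonality of the selector characters -/
lemma chiSel_orth (σ σ' : Fin R → Fin K) :
    ∑ x : Fin R → Fin K → Bool, chiSel σ x * chiSel σ' x
      = if σ = σ' then ((2:ℝ)^K)^R else 0 := by
  have hfac : ∀ x : Fin R → Fin K → Bool, chiSel σ x * chiSel σ' x
      = ∏ r, (sg (x r (σ r)) * sg (x r (σ' r))) := by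
    intro x
    rw [chiSel_eq_prod_sg, chiSel_eq_prod_sg, ← Finset.prod_mul_distrib]
  rw [Finset.sum_congr rfl (fun x _ => hfac x)]
  have hpi : ∑ x : Fin R → Fin K → Bool, ∏ r, (sg (x r (σ r)) * sg (x r (σ' r)))
      = ∏ r, ∑ y : Fin K → Bool, (sg (y (σ r)) * sg (y (σ' r))) := by
    rw [← Fintype.piFinset_univ (α := Fin R)]
    exact Finset.sum_prod_piFinset Finset.univ (fun (r : Fin R) (y : Fin K → Bool) => sg (y (σ r)) * sg (y (σ' r)))
  rw [hpi]
  by_cases hσ : σ = σ'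
  · subst hσ
    rw [if_pos rfl]
    have e3 : ∀ r : Fin R, (∑ y : Fin K → Bool, sg (y (σ r)) * sg (y (σ r)))
        = (2:ℝ)^K := by
      intro r
      rw [Finset.sum_congr rfl fun y _ => sg_mul_self (y (σ r)), Finset.sum_const]
      simp [Fintype.card_fun]
    rw [Finset.prod_congr rfl (fun r _ => e3 r), Finset.prod_const, Finset.card_univ,
      Fintype.card_fin]
  · rw [if_neg hσ]
    obtain ⟨r0, hr0⟩ := Function.ne_iff.1 hσ
    refine Finset.prod_eq_zero (Finset.mem_univ r0) ?_
    have hflip := sum_flip (ι := Fin K) (σ r0)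
      (fun y => sg (y (σ r0)) * sg (y (σ' r0)))
    have e2 : ∀ y : Fin K → Bool,
        sg ((Function.update y (σ r0) (!(y (σ r0)))) (σ r0))
          * sg ((Function.update y (σ r0) (!(y (σ r0)))) (σ' r0))
        = -(sg (y (σ r0)) * sg (y (σ' r0))) := by
      intro y
      rw [Function.update_self, Function.update_of_ne (fun hc => hr0 hc.symm),
        sg_neg_flip]
      ring
    rw [Finset.sum_congr rfl (fun y _ => e2 y), Finset.sum_neg_distrib] at hflip
    linarith


variable (μ : (Fin R → Fin K → Bool) → ℝ)

def fhat (σ : Fin R → Fin K) : ℝ := ∑ x, μ x * chiSel σ x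

def FS (x : Fin R → Fin K → Bool) : ℝ := ∑ σ, fhat μ σ * chiSel σ x

def Wsum : ℝ := ∑ σ : Fin R → Fin K, (fhat μ σ)^2

lemma Wsum_nonneg : 0 ≤ Wsum μ := Finset.sum_nonneg fun σ _ => sq_nonneg _

lemma W_eq : Wsum μ = ∑ x, μ x * FS μ x := by
  unfold Wsum FS
  have e1 : ∀ x : Fin R → Fin K → Bool, μ x * (∑ σ, fhat μ σ * chiSel σ x)
      = ∑ σ, fhat μ σ * (μ x * chiSel σ x) := by
    intro x
    rw [Finset.mul_sum]
    exact Finset.sum_congr rfl fun σ _ => by ring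
  rw [Finset.sum_congr rfl (fun x _ => e1 x), Finset.sum_comm]
  refine Finset.sum_congr rfl fun σ _ => ?_
  rw [← Finset.mul_sum, sq]
  rfl

lemma sum_FS_sq : ∑ x, (FS μ x)^2 = ((2:ℝ)^K)^R * Wsum μ := by
  unfold FS Wsum
  have e1 : ∀ x : Fin R → Fin K → Bool,
      (∑ σ, fhat μ σ * chiSel σ x)^2
        = ∑ σ, ∑ σ', (fhat μ σ * fhat μ σ') * (chiSel σ x * chiSel σ' x) := by
    intro x
    rw [sq, Finset.sum_mul_sum]
    exact Finset.sum_congr rfl fun σ _ => Finset.sum_congr rfl fun σ' _ => by ring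
  rw [Finset.sum_congr rfl (fun x _ => e1 x), Finset.sum_comm]
  have e2 : ∀ σ : Fin R → Fin K,
      (∑ x : Fin R → Fin K → Bool, ∑ σ', (fhat μ σ * fhat μ σ') * (chiSel σ x * chiSel σ' x))
        = ∑ σ', (fhat μ σ * fhat μ σ') * (if σ = σ' then ((2:ℝ)^K)^R else 0) := by
    intro σ
    rw [Finset.sum_comm]
    refine Finset.sum_congr rfl fun σ' _ => ?_
    rw [← chiSel_orth σ σ', Finset.mul_sum]
  rw [Finset.sum_congr rfl (fun σ _ => e2 σ), Finset.mul_sum]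
  refine Finset.sum_congr rfl fun σ _ => ?_
  have e4 : ∀ σ' : Fin R → Fin K,
      fhat μ σ * fhat μ σ' * (if σ = σ' then ((2:ℝ)^K)^R else 0)
        = if σ = σ' then (fhat μ σ * fhat μ σ' * ((2:ℝ)^K)^R) else 0 := by
    intro σ'
    split <;> ring
  rw [Finset.sum_congr rfl (fun σ' _ => e4 σ'),
    Finset.sum_ite_eq Finset.univ σ (fun σ' => fhat μ σ * fhat μ σ' * ((2:ℝ)^K)^R)]
  simp only [Finset.mem_univ, if_true, sq]
  ring
  
/-- hypercontractive bound transported to block functions -/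
lemma sum_FS_pow (q : ℕ) (hq : 1 ≤ q) :
    (∑ x, (FS μ x)^(2*q)) * (((2:ℝ)^K)^R) ^ (q-1)
      ≤ ((2*(q:ℝ))^R * (((2:ℝ)^K)^R * Wsum μ))^q := by
  classical
  set c : Finset (Fin R × Fin K) → ℝ :=
    fun S => ∑ σ ∈ Finset.univ.filter (fun σ => graphOf σ = S), fhat μ σ with hc
  have hdeg : ∀ S ∈ (Finset.univ : Finset (Fin R × Fin K)).powerset, R < S.card → c S = 0 := by
    intro S _ hS
    refine Finset.sum_eq_zero fun σ hσ => ?_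
    exfalso
    have := (Finset.mem_filter.1 hσ).2
    rw [← this, card_graphOf] at hS
    omega
  have HH := hyper (ι := Fin R × Fin K) q hq Finset.univ R c hdeg
  -- transport sums over z to sums over x
  have hcard : Fintype.card (Fin R × Fin K) = R * K := by
    simp [Fintype.card_prod, Fintype.card_fin]
  have hFnFS : ∀ z : Fin R × Fin K → Bool, Fn Finset.univ c z = FS μ (fun r k => z (r,k)) := by
    intro z
    rw [hc, Fn_graph_sum]
    rfl
  have htrans : ∀ m : ℕ, (∑ z : Fin R × Fin K → Bool, (Fn Finset.univ c z)^m)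
      = ∑ x : Fin R → Fin K → Bool, (FS μ x)^m := by
    intro m
    rw [Finset.sum_congr rfl (fun z _ => by rw [hFnFS z])]
    exact Fintype.sum_equiv (Equiv.curry (Fin R) (Fin K) Bool) _ _ (fun z => rfl)
  have h2 : ((2:ℝ) ^ (Fintype.card (Fin R × Fin K))) = ((2:ℝ)^K)^R := by
    rw [hcard, mul_comm, pow_mul]
  rw [htrans (2*q), htrans 2, h2, sum_FS_sq] at HH
  exact HH


lemma sum_FS_pow' (q : ℕ) (hq : 1 ≤ q) :
    ∑ x, (FS μ x)^(2*q) ≤ (2*(q:ℝ))^(R*q) * (((2:ℝ)^K)^R * (Wsum μ)^q) := by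
  have h := sum_FS_pow μ q hq
  have hXp : (0:ℝ) < ((((2:ℝ)^K)^R)) ^ (q-1) := by positivity
  rw [← mul_le_mul_iff_of_pos_right hXp]
  refine h.trans (le_of_eq ?_)
  have hXX : (((2:ℝ)^K)^R)^q = (((2:ℝ)^K)^R) * ((((2:ℝ)^K)^R))^(q-1) := by
    rw [← pow_succ']
    congr 1
    omega
  calc ((2*(q:ℝ))^R * (((2:ℝ)^K)^R * Wsum μ))^q
      = ((2*(q:ℝ))^R)^q * ((((2:ℝ)^K)^R)^q * (Wsum μ)^q) := by
        rw [mul_pow ((2*(q:ℝ))^R) (((2:ℝ)^K)^R * Wsum μ) q,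
          mul_pow (((2:ℝ)^K)^R) (Wsum μ) q]
    _ = (2*(q:ℝ))^(R*q) * (((2:ℝ)^K)^R * (Wsum μ)^q) * ((((2:ℝ)^K)^R))^(q-1) := by
        rw [hXX, ← pow_mul (2*(q:ℝ)) R q]
        ring

lemma chain (hμ0 : ∀ x, 0 ≤ μ x)
    (T : Finset (Fin R → Fin K → Bool)) (hTdef : ∀ x, x ∈ T ↔ 0 < μ x)
    (hTne : 0 < ((T.card : ℕ):ℝ))
    (ε : ℝ) (hε : 0 ≤ ε) (hflat : ∀ x ∈ T, μ x ≤ (1+ε)/T.card)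
    (q : ℕ) (hq : 1 ≤ q) (κ : ℝ) (hκ : 0 ≤ κ)
    (HCF : ∑ x, (FS μ x)^(2*q) ≤ κ^(R*q) * (((2:ℝ)^K)^R * (Wsum μ)^q)) :
    (Wsum μ)^q * T.card ≤ (1+ε)^(2*q) * (κ^(R*q) * ((2:ℝ)^K)^R) := by
  have hX : (0:ℝ) < ((2:ℝ)^K)^R := by positivity
  have habs : ∀ x ∈ T, (0:ℝ) ≤ |FS μ x| := fun x _ => abs_nonneg _
  have step1 : Wsum μ * T.card ≤ (1+ε) * ∑ x ∈ T, |FS μ x| := by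
    have h0 : Wsum μ = ∑ x ∈ T, μ x * FS μ x := by
      rw [W_eq]
      refine (Finset.sum_subset (Finset.subset_univ T) ?_).symm
      intro x _ hx
      have hμx : μ x = 0 := by
        have h1 := mt (hTdef x).2 hx
        push_neg at h1
        linarith [hμ0 x]
      rw [hμx, zero_mul]
    calc Wsum μ * T.card = (∑ x ∈ T, μ x * FS μ x) * T.card := by rw [h0]
      _ ≤ (∑ x ∈ T, ((1+ε)/T.card) * |FS μ x|) * T.card := by
          refine mul_le_mul_of_nonneg_right (Finset.sum_le_sum ?_) (le_of_lt hTne)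
          intro x hx
          calc μ x * FS μ x ≤ μ x * |FS μ x| :=
                mul_le_mul_of_nonneg_left (le_abs_self _) (hμ0 x)
            _ ≤ ((1+ε)/T.card) * |FS μ x| :=
                mul_le_mul_of_nonneg_right (hflat x hx) (abs_nonneg _)
      _ = (1+ε) * ∑ x ∈ T, |FS μ x| := by
          rw [← Finset.mul_sum, div_mul_eq_mul_div, div_mul_cancel₀ _ (ne_of_gt hTne)]
  have step2 : (∑ x ∈ T, |FS μ x|)^(2*q)
      ≤ ((T.card:ℝ))^(2*q-1) * ∑ x, (FS μ x)^(2*q) := by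
    have hpm := pow_sum_div_card_le_sum_pow (s := T)
      (f := fun x => |FS μ x|) habs (2*q-1)
    rw [show 2*q-1+1 = 2*q from by omega] at hpm
    have hT2 : ∑ x ∈ T, |FS μ x|^(2*q) ≤ ∑ x, (FS μ x)^(2*q) := by
      have e : ∀ x, |FS μ x|^(2*q) = (FS μ x)^(2*q) := by
        intro x
        rw [pow_mul, sq_abs, ← pow_mul]
      rw [Finset.sum_congr rfl (fun x _ => e x)]
      refine Finset.sum_le_sum_of_subset_of_nonneg (Finset.subset_univ T) ?_
      intro x _ _
      rw [pow_mul]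
      positivity
    have hdiv := (div_le_iff₀ (by positivity : (0:ℝ) < ((T.card:ℝ))^(2*q-1))).1 hpm
    calc (∑ x ∈ T, |FS μ x|)^(2*q)
        ≤ (∑ x ∈ T, |FS μ x|^(2*q)) * ((T.card:ℝ))^(2*q-1) := hdiv
      _ ≤ (∑ x, (FS μ x)^(2*q)) * ((T.card:ℝ))^(2*q-1) :=
          mul_le_mul_of_nonneg_right hT2 (by positivity)
      _ = _ := by ring
  rcases eq_or_lt_of_le (Wsum_nonneg μ) with hW0 | hWpos
  · rw [← hW0, zero_pow (by omega : q ≠ 0), zero_mul]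
    positivity
  · have hWq : (0:ℝ) < (Wsum μ)^q := pow_pos hWpos q
    have hTpow : (0:ℝ) < ((T.card:ℝ))^(2*q-1) := by positivity
    have hTc : ((T.card:ℝ))^(2*q) = (T.card:ℝ) * ((T.card:ℝ))^(2*q-1) := by
      rw [← pow_succ']
      congr 1
      omega
    have main2 : ((Wsum μ)^(2*q) * T.card) * ((T.card:ℝ))^(2*q-1)
        ≤ ((1+ε)^(2*q) * (κ^(R*q) * ((2:ℝ)^K)^R) * (Wsum μ)^q) * ((T.card:ℝ))^(2*q-1) := by
      calc ((Wsum μ)^(2*q) * T.card) * ((T.card:ℝ))^(2*q-1)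
          = (Wsum μ * T.card)^(2*q) := by rw [mul_pow, hTc]; ring
        _ ≤ ((1+ε) * ∑ x ∈ T, |FS μ x|)^(2*q) :=
            pow_le_pow_left₀ (mul_nonneg (Wsum_nonneg μ) (le_of_lt hTne)) step1 _
        _ = (1+ε)^(2*q) * (∑ x ∈ T, |FS μ x|)^(2*q) := mul_pow _ _ _
        _ ≤ (1+ε)^(2*q) * (((T.card:ℝ))^(2*q-1) * ∑ x, (FS μ x)^(2*q)) :=
            mul_le_mul_of_nonneg_left step2 (by positivity)
        _ ≤ (1+ε)^(2*q) * (((T.card:ℝ))^(2*q-1)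
              * (κ^(R*q) * (((2:ℝ)^K)^R * (Wsum μ)^q))) := by
            refine mul_le_mul_of_nonneg_left
              (mul_le_mul_of_nonneg_left HCF (by positivity)) (by positivity)
        _ = ((1+ε)^(2*q) * (κ^(R*q) * ((2:ℝ)^K)^R) * (Wsum μ)^q) * ((T.card:ℝ))^(2*q-1) := by
            ring
    have main := le_of_mul_le_mul_right main2 hTpow
    have main3 : ((Wsum μ)^q * T.card) * (Wsum μ)^q
        ≤ ((1+ε)^(2*q) * (κ^(R*q) * ((2:ℝ)^K)^R)) * (Wsum μ)^q := by
      calc ((Wsum μ)^q * T.card) * (Wsum μ)^q = (Wsum μ)^(2*q) * T.card := by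
            rw [show 2*q = q + q from by ring, pow_add]
            ring
        _ ≤ _ := main
    exact le_of_mul_le_mul_right main3 hWq

end Application

section Numeric

lemma two_rpow_le_one_add (y : ℝ) (h0 : 0 ≤ y) (h1 : y ≤ 1) : (2:ℝ)^y ≤ 1 + y := by
  have h2 : (2:ℝ)^y = Real.exp (Real.log 2 * y) := Real.rpow_def_of_pos (by norm_num) y
  have hc := convexOn_exp.2 (Set.mem_univ (0:ℝ)) (Set.mem_univ (Real.log 2))
    (by linarith : (0:ℝ) ≤ 1 - y) h0 (by ring)
  simp only [smul_eq_mul, mul_zero, zero_add, Real.exp_zero,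
    Real.exp_log (show (0:ℝ) < 2 by norm_num)] at hc
  rw [h2, mul_comm]
  calc Real.exp (y * Real.log 2) ≤ (1-y) * 1 + y * 2 := hc
    _ = 1 + y := by ring

lemma numeric1 {t : ℝ} (h1 : 1/2 ≤ t) (h2 : t ≤ 1) : (2:ℝ)^t ≤ 4*t := by
  have := two_rpow_le_one_add t (by linarith) h2
  linarith

lemma numeric2 {t : ℝ} (ht : 1 ≤ t) :
    (2*((⌊t⌋₊ : ℕ):ℝ))^(⌊t⌋₊) * (2:ℝ)^t ≤ (4*t)^(⌊t⌋₊) := by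
  set q : ℕ := ⌊t⌋₊ with hq
  have ht0 : (0:ℝ) ≤ t := by linarith
  have hq1 : 1 ≤ q := Nat.le_floor (by exact_mod_cast ht)
  have hqt : (q:ℝ) ≤ t := Nat.floor_le ht0
  have htq : t < (q:ℝ) + 1 := Nat.lt_floor_add_one t
  have hqR : (0:ℝ) < (q:ℝ) := by exact_mod_cast hq1
  set x : ℝ := t / q with hx
  have hx1 : 1 ≤ x := (le_div_iff₀ hqR).2 (by linarith)
  have hx2 : x ≤ 2 := by
    rw [hx, div_le_iff₀ hqR]
    have h1q : (1:ℝ) ≤ (q:ℝ) := by exact_mod_cast hq1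
    linarith
  have hchord : (2:ℝ)^(x-1) ≤ x := by
    have := two_rpow_le_one_add (x-1) (by linarith) (by linarith)
    linarith
  have h2x : (2:ℝ)^x ≤ 2*x := by
    have he : (2:ℝ)^x = 2 * (2:ℝ)^(x-1) := by
      rw [show x = 1 + (x-1) from by ring, Real.rpow_add (by norm_num : (0:ℝ) < 2),
        Real.rpow_one]
      ring_nf
    rw [he]
    linarith [hchord]
  have h2t : (2:ℝ)^t = ((2:ℝ)^x)^q := by
    rw [← Real.rpow_natCast ((2:ℝ)^x) q, ← Real.rpow_mul (by norm_num : (0:ℝ) ≤ 2), hx,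
      div_mul_cancel₀ _ (ne_of_gt hqR)]
  calc (2*(q:ℝ))^q * (2:ℝ)^t = (2*(q:ℝ))^q * ((2:ℝ)^x)^q := by rw [h2t]
    _ ≤ (2*(q:ℝ))^q * (2*x)^q := by
        refine mul_le_mul_of_nonneg_left
          (pow_le_pow_left₀ (Real.rpow_nonneg (by norm_num) x) h2x q) (by positivity)
    _ = ((2*(q:ℝ)) * (2*x))^q := (mul_pow _ _ q).symm
    _ = (4*t)^q := by
        congr 1
        rw [hx]
        field_simp
        ring

end Numeric

end Stmt10Aux

open Stmt10Aux


/-- If `μ` is a nearly flat distribution on `({0,1}^K)^R` with support of size at least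
`2^{(1-γ)RK}`, then for a uniformly random selector `σ`,
`Pr_σ[|E_{x∼μ}[χ_σ(x)]| ≥ (8γ)^{R/2}] ≤ (1+ε)²·2^{-R}`. -/
theorem stmt10 (R K : ℕ) (hR : 0 < R) (hK : 0 < K) (γ ε : ℝ)
    (hγ0 : 0 < γ) (hγ1 : γ ≤ 1) (hγK : 1 ≤ 2 * γ * K) (hε : 0 ≤ ε)
    (μ : (Fin R → Fin K → Bool) → ℝ) (hμ0 : ∀ x, 0 ≤ μ x) (hμ1 : ∑ x, μ x = 1)
    (T : Finset (Fin R → Fin K → Bool)) (hTdef : ∀ x, x ∈ T ↔ 0 < μ x)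
    (hTcard : (2 : ℝ) ^ ((1 - γ) * R * K) ≤ (T.card : ℝ))
    (hflat : ∀ x ∈ T, μ x ≤ (1 + ε) / T.card) :
    ((Finset.univ.filter fun σ : Fin R → Fin K =>
        (8 * γ) ^ ((R : ℝ) / 2) ≤ |∑ x, μ x * chiSel σ x|).card : ℝ) / (K : ℝ) ^ R
      ≤ (1 + ε) ^ 2 * ((2 : ℝ) ^ R)⁻¹ := by
  classical
  have hfh : ∀ σ : Fin R → Fin K, (∑ x, μ x * chiSel σ x) = fhat μ σ := fun _ => rfl
  simp only [hfh]
  set t : ℝ := γ * K with ht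
  have hKR0 : (0:ℝ) < (K:ℝ) := by exact_mod_cast hK
  have ht2 : 1/2 ≤ t := by
    have e : 2*γ*(K:ℝ) = 2*t := by rw [ht]; ring
    linarith [hγK, e.symm.le, e.le]
  have ht0 : 0 < t := by positivity
  obtain ⟨q, κ, hq1, hκ0, hnum, hHCF⟩ : ∃ (q : ℕ) (κ : ℝ), 1 ≤ q ∧ 0 ≤ κ ∧
      κ^q * (2:ℝ)^t ≤ (4*t)^q ∧
      (∑ x, (FS μ x)^(2*q) ≤ κ^(R*q) * (((2:ℝ)^K)^R * (Wsum μ)^q)) := by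
    by_cases hcase : t ≤ 1
    · refine ⟨1, 1, le_rfl, zero_le_one, ?_, ?_⟩
      · simpa using numeric1 ht2 hcase
      · norm_num
        exact le_of_eq (sum_FS_sq μ)
    · push_neg at hcase
      have ht1 : 1 ≤ t := le_of_lt hcase
      have hfl1 : 1 ≤ ⌊t⌋₊ := Nat.le_floor (by exact_mod_cast ht1)
      exact ⟨⌊t⌋₊, 2*((⌊t⌋₊:ℕ):ℝ), hfl1, by positivity,
        numeric2 ht1, sum_FS_pow' μ ⌊t⌋₊ hfl1⟩
  have hTc0 : (0:ℝ) < ((T.card : ℕ):ℝ) := by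
    have hne : T.Nonempty := by
      by_contra hemp
      rw [Finset.not_nonempty_iff_eq_empty] at hemp
      have hz : ∑ x, μ x = 0 := by
        refine Finset.sum_eq_zero fun x _ => ?_
        have hx : x ∉ T := by rw [hemp]; exact Finset.notMem_empty x
        have h1 := mt (hTdef x).2 hx
        push_neg at h1
        linarith [hμ0 x]
      rw [hμ1] at hz
      norm_num at hz
    exact_mod_cast Finset.card_pos.2 hne
  have hch := chain μ hμ0 T hTdef hTc0 ε hε hflat q hq1 κ hκ0 hHCF
  have hX : ((2:ℝ)^K)^R = (2:ℝ)^(t*R + (1-γ)*R*K) := by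
    rw [← pow_mul, ← Real.rpow_natCast (2:ℝ) (K*R)]
    congr 1
    rw [ht]
    push_cast
    ring
  have hstep : κ^(R*q) * ((2:ℝ)^K)^R ≤ ((4*t)^R)^q * (2:ℝ)^((1-γ)*R*K) := by
    have h1 : (κ^q * (2:ℝ)^t)^R ≤ ((4*t)^q)^R :=
      pow_le_pow_left₀ (by positivity) hnum R
    have h2 : (κ^q * (2:ℝ)^t)^R = κ^(R*q) * (2:ℝ)^(t*(R:ℕ)) := by
      rw [mul_pow, ← pow_mul, ← Real.rpow_natCast ((2:ℝ)^t) R,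
        ← Real.rpow_mul (by norm_num : (0:ℝ) ≤ 2), Nat.mul_comm q R]
    calc κ^(R*q) * ((2:ℝ)^K)^R
        = (κ^(R*q) * (2:ℝ)^(t*(R:ℕ))) * (2:ℝ)^((1-γ)*R*K) := by
          rw [hX, Real.rpow_add (by norm_num : (0:ℝ) < 2)]
          ring
      _ ≤ (((4*t)^q)^R) * (2:ℝ)^((1-γ)*R*K) := by
          refine mul_le_mul_of_nonneg_right ?_ (Real.rpow_nonneg (by norm_num) _)
          rw [← h2]
          exact h1
      _ = ((4*t)^R)^q * (2:ℝ)^((1-γ)*R*K) := by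
          rw [← pow_mul, ← pow_mul, Nat.mul_comm]
  have hY0 : (0:ℝ) ≤ (1+ε)^2 * (4*t)^R := by positivity
  have hWle : Wsum μ ≤ (1+ε)^2 * (4*t)^R := by
    have hq0 : q ≠ 0 := by omega
    refine le_of_pow_le_pow_left₀ hq0 hY0 ?_
    refine le_of_mul_le_mul_right ?_ hTc0
    calc (Wsum μ)^q * ((T.card : ℕ):ℝ)
        ≤ (1+ε)^(2*q) * (κ^(R*q) * ((2:ℝ)^K)^R) := hch
      _ ≤ (1+ε)^(2*q) * (((4*t)^R)^q * (2:ℝ)^((1-γ)*R*K)) :=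
          mul_le_mul_of_nonneg_left hstep (by positivity)
      _ ≤ (1+ε)^(2*q) * (((4*t)^R)^q * ((T.card : ℕ):ℝ)) := by
          refine mul_le_mul_of_nonneg_left
            (mul_le_mul_of_nonneg_left hTcard (by positivity)) (by positivity)
      _ = ((1+ε)^2 * (4*t)^R)^q * ((T.card : ℕ):ℝ) := by
          rw [mul_pow ((1+ε)^2) ((4*t)^R) q, ← pow_mul (1+ε) 2 q]
          ring
  -- Markov counting
  have h8 : (0:ℝ) < (8*γ)^R := by positivity
  have hKRpow : (0:ℝ) < (K:ℝ)^R := by positivity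
  have hterm : ∀ σ ∈ (Finset.univ.filter fun σ : Fin R → Fin K =>
      (8 * γ) ^ ((R : ℝ) / 2) ≤ |fhat μ σ|), ((8*γ):ℝ)^R ≤ (fhat μ σ)^2 := by
    intro σ hσ
    have hσ' := (Finset.mem_filter.1 hσ).2
    have e1 : (((8*γ):ℝ)^((R:ℝ)/2))^(2:ℕ) = ((8*γ):ℝ)^R := by
      rw [← Real.rpow_natCast (((8*γ):ℝ)^((R:ℝ)/2)) 2,
        ← Real.rpow_mul (by positivity : (0:ℝ) ≤ 8*γ)]
      rw [show ((R:ℝ)/2) * ((2:ℕ):ℝ) = (R:ℝ) from by push_cast; ring]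
      exact Real.rpow_natCast _ R
    calc ((8*γ):ℝ)^R = (((8*γ):ℝ)^((R:ℝ)/2))^(2:ℕ) := e1.symm
      _ ≤ |fhat μ σ|^2 := pow_le_pow_left₀ (Real.rpow_nonneg (by positivity) _) hσ' 2
      _ = (fhat μ σ)^2 := sq_abs _
  have hcount : (((Finset.univ.filter fun σ : Fin R → Fin K =>
      (8 * γ) ^ ((R : ℝ) / 2) ≤ |fhat μ σ|).card : ℕ):ℝ) * ((8*γ):ℝ)^R ≤ Wsum μ := by
    calc (((Finset.univ.filter fun σ : Fin R → Fin K =>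
          (8 * γ) ^ ((R : ℝ) / 2) ≤ |fhat μ σ|).card : ℕ):ℝ) * ((8*γ):ℝ)^R
        = (Finset.univ.filter fun σ : Fin R → Fin K =>
            (8 * γ) ^ ((R : ℝ) / 2) ≤ |fhat μ σ|).card • ((8*γ):ℝ)^R :=
          (nsmul_eq_mul _ _).symm
      _ ≤ ∑ σ ∈ (Finset.univ.filter fun σ : Fin R → Fin K =>
            (8 * γ) ^ ((R : ℝ) / 2) ≤ |fhat μ σ|), (fhat μ σ)^2 :=
          Finset.card_nsmul_le_sum _ _ _ hterm
      _ ≤ Wsum μ :=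
          Finset.sum_le_sum_of_subset_of_nonneg (Finset.subset_univ _)
            (fun σ _ _ => sq_nonneg _)
  rw [div_le_iff₀ hKRpow]
  refine le_of_mul_le_mul_right ?_ h8
  calc (((Finset.univ.filter fun σ : Fin R → Fin K =>
        (8 * γ) ^ ((R : ℝ) / 2) ≤ |fhat μ σ|).card : ℕ):ℝ) * ((8*γ):ℝ)^R
      ≤ (1+ε)^2 * (4*t)^R := le_trans hcount hWle
    _ = ((1+ε)^2 * ((2:ℝ)^R)⁻¹ * (K:ℝ)^R) * (8*γ)^R := by
        have hmm : (4*t)^R * ((2:ℝ)^R) = (8*γ)^R * (K:ℝ)^R := by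
          rw [← mul_pow, ← mul_pow]
          congr 1
          rw [ht]
          ring
        have h2R : ((2:ℝ)^R) ≠ 0 := by positivity
        rw [show (1+ε)^2 * (4*t)^R = (1+ε)^2 * ((4*t)^R * 2^R) * ((2:ℝ)^R)⁻¹ by
          rw [mul_assoc ((1+ε)^2), mul_inv_cancel_right₀ h2R], hmm]
        ring
end
end

section
/- Let X and Y be finite nonempty sets and let A : X × Y → ℝ be a real matrix with spectral (operator) norm ‖A‖. Let T be a Y-valued random variable and M a random variable jointly distributed with T taking at most 2^c distinct values (c ≥ 0 a real number). Then E_{m∼M}[ (1/|X|) ∑_{x∈X} | ∑_{y∈Y} Pr[T=y | M=m] · A(x,y) | ] ≤ |X|^{−1/2} · ‖A‖ · 2^{−H̃∞(T|M)/2} ≤ |X|^{−1/2} · ‖A‖ · 2^{−(H∞(T)−c)/2}. -/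
noncomputable section
open scoped Classical
open Finset

/-- Probability of an event under a probability mass function `p` on a finite sample space. -/
def prEvt {Ω : Type*} [Fintype Ω] (p : Ω → ℝ) (E : Set Ω) : ℝ :=
  ∑ ω, if ω ∈ E then p ω else 0

/-- Conditional probability of `E` given `F`. -/
def cprEvt {Ω : Type*} [Fintype Ω] (p : Ω → ℝ) (E F : Set Ω) : ℝ :=
  prEvt p (E ∩ F) / prEvt p F

/-- Min-entropy `H∞(X) = -log₂ max_x Pr[X=x]`. -/
def minEnt {Ω α : Type*} [Fintype Ω] [Fintype α] [Nonempty α]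
    (p : Ω → ℝ) (X : Ω → α) : ℝ :=
  - Real.logb 2 (⨆ x : α, prEvt p {ω | X ω = x})

/-- Average min-entropy `H̃∞(X|Y) = -log₂ (E_{y∼Y}[max_x Pr[X=x|Y=y]])`. -/
def avgMinEnt {Ω α β : Type*} [Fintype Ω] [Fintype α] [Nonempty α] [Fintype β]
    (p : Ω → ℝ) (X : Ω → α) (Y : Ω → β) : ℝ :=
  - Real.logb 2 (∑ y : β, prEvt p {ω | Y ω = y} * ⨆ x : α, cprEvt p {ω | X ω = x} {ω | Y ω = y})

/-- The spectral (ℓ₂ operator) norm of a real matrix: the operator norm of the induced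
linear map between Euclidean spaces, i.e. its largest singular value. -/
def specNorm {X Y : Type*} [Fintype X] [Fintype Y] [DecidableEq Y] (A : Matrix X Y ℝ) : ℝ :=
  ‖LinearMap.toContinuousLinearMap (Matrix.toEuclideanLin A)‖


lemma prEvt_nonneg {Ω : Type*} [Fintype Ω] {p : Ω → ℝ} (hp : ∀ ω, 0 ≤ p ω) (E : Set Ω) :
    0 ≤ prEvt p E := Finset.sum_nonneg fun ω _ => by split <;> simp [hp ω]

lemma prEvt_mono {Ω : Type*} [Fintype Ω] {p : Ω → ℝ} (hp : ∀ ω, 0 ≤ p ω) {E F : Set Ω}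
    (h : E ⊆ F) : prEvt p E ≤ prEvt p F := by
  refine Finset.sum_le_sum fun ω _ => ?_
  by_cases hE : ω ∈ E
  · simp [hE, h hE]
  · simp only [hE, if_false]; split <;> simp [hp ω]

lemma sum_prEvt_fiber {Ω β : Type*} [Fintype Ω] [Fintype β] (p : Ω → ℝ) (f : Ω → β) :
    ∑ b : β, prEvt p {ω | f ω = b} = ∑ ω, p ω := by
  unfold prEvt
  rw [Finset.sum_comm]
  refine Finset.sum_congr rfl fun ω _ => ?_
  simp [Set.mem_setOf_eq]

lemma sum_prEvt_fiber_inter {Ω β : Type*} [Fintype Ω] [Fintype β] (p : Ω → ℝ) (f : Ω → β)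
    (F : Set Ω) : ∑ b : β, prEvt p ({ω | f ω = b} ∩ F) = prEvt p F := by
  unfold prEvt
  rw [Finset.sum_comm]
  refine Finset.sum_congr rfl fun ω _ => ?_
  by_cases hF : ω ∈ F <;> simp [Set.mem_inter_iff, Set.mem_setOf_eq, hF]

lemma cprEvt_nonneg {Ω : Type*} [Fintype Ω] {p : Ω → ℝ} (hp : ∀ ω, 0 ≤ p ω) (E F : Set Ω) :
    0 ≤ cprEvt p E F := div_nonneg (prEvt_nonneg hp _) (prEvt_nonneg hp _)

lemma sum_cprEvt {Ω β : Type*} [Fintype Ω] [Fintype β] {p : Ω → ℝ} (f : Ω → β) {F : Set Ω}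
    (hF : prEvt p F ≠ 0) : ∑ b : β, cprEvt p {ω | f ω = b} F = 1 := by
  unfold cprEvt
  rw [← Finset.sum_div, sum_prEvt_fiber_inter, div_self hF]

lemma specNorm_nonneg {X Y : Type*} [Fintype X] [Fintype Y] [DecidableEq Y]
    (A : Matrix X Y ℝ) : 0 ≤ specNorm A := norm_nonneg _

lemma specNorm_bound {X Y : Type*} [Fintype X] [Fintype Y] [DecidableEq X] [DecidableEq Y]
    (A : Matrix X Y ℝ) (v : Y → ℝ) :
    Real.sqrt (∑ x, (∑ y, v y * A x y) ^ 2) ≤ specNorm A * Real.sqrt (∑ y, (v y) ^ 2) := by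
  set w : EuclideanSpace ℝ Y := (WithLp.equiv 2 _).symm v with hw
  have h := (LinearMap.toContinuousLinearMap (Matrix.toEuclideanLin A)).le_opNorm w
  rw [LinearMap.coe_toContinuousLinearMap'] at h
  have h1 : Matrix.toEuclideanLin A w = (WithLp.equiv 2 (X → ℝ)).symm (A.mulVec v) := by
    rw [hw]
    rfl
  rw [h1] at h
  have h2 : ‖(WithLp.equiv 2 (X → ℝ)).symm (A.mulVec v)‖
      = Real.sqrt (∑ x, (∑ y, v y * A x y) ^ 2) := by
    rw [EuclideanSpace.norm_eq]
    congr 1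
    refine Finset.sum_congr rfl fun x _ => ?_
    rw [WithLp.equiv_symm_apply, PiLp.toLp_apply]
    rw [Real.norm_eq_abs, sq_abs]
    congr 1
    simp [Matrix.mulVec, dotProduct, mul_comm]
  have h3 : ‖w‖ = Real.sqrt (∑ y, (v y) ^ 2) := by
    rw [hw, EuclideanSpace.norm_eq]
    congr 1
    refine Finset.sum_congr rfl fun y _ => ?_
    rw [WithLp.equiv_symm_apply, PiLp.toLp_apply, Real.norm_eq_abs, sq_abs]
  rw [h2, h3] at h
  exact h

/-- One-way discrepancy bound via the spectral norm and average min-entropy. -/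
theorem stmt16 {Ω X Y κ : Type*} [Fintype Ω] [Fintype X] [Nonempty X]
    [Fintype Y] [DecidableEq Y] [Nonempty Y] [Fintype κ]
    (p : Ω → ℝ) (hp : ∀ ω, 0 ≤ p ω) (hsum : ∑ ω, p ω = 1)
    (A : Matrix X Y ℝ) (T : Ω → Y) (M : Ω → κ) (c : ℝ) (hc : 0 ≤ c)
    (hM : ((Finset.univ.filter fun k : κ => prEvt p {ω | M ω = k} ≠ 0).card : ℝ) ≤ (2 : ℝ) ^ c) :
    (∑ k : κ, prEvt p {ω | M ω = k} *
        ((Fintype.card X : ℝ)⁻¹ *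
          ∑ x : X, |∑ y : Y, cprEvt p {ω | T ω = y} {ω | M ω = k} * A x y|))
      ≤ (Fintype.card X : ℝ) ^ (-(1 / 2 : ℝ)) * specNorm A *
          (2 : ℝ) ^ (-(avgMinEnt p T M) / 2) ∧
    (Fintype.card X : ℝ) ^ (-(1 / 2 : ℝ)) * specNorm A *
        (2 : ℝ) ^ (-(avgMinEnt p T M) / 2)
      ≤ (Fintype.card X : ℝ) ^ (-(1 / 2 : ℝ)) * specNorm A *
          (2 : ℝ) ^ (-(minEnt p T - c) / 2) := by
  -- notation
  set n : ℝ := (Fintype.card X : ℝ) with hn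
  have hnpos : (0 : ℝ) < n := by
    simpa [hn] using (Nat.cast_pos (α := ℝ)).mpr (Fintype.card_pos (α := X))
  set q : κ → ℝ := fun k => prEvt p {ω | M ω = k} with hqdef
  set v : κ → Y → ℝ := fun k y => cprEvt p {ω | T ω = y} {ω | M ω = k} with hvdef
  set s : κ → ℝ := fun k => ⨆ y : Y, v k y with hsdef
  set S : ℝ := ∑ k : κ, q k * s k with hSdef
  set P : ℝ := ⨆ y : Y, prEvt p {ω | T ω = y} with hPdef
  have hq0 : ∀ k, 0 ≤ q k := fun k => prEvt_nonneg hp _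
  have hqsum : ∑ k, q k = 1 := by rw [hqdef]; rw [sum_prEvt_fiber p M, hsum]
  have hv0 : ∀ k y, 0 ≤ v k y := fun k y => cprEvt_nonneg hp _ _
  have hvs : ∀ k y, v k y ≤ s k := by
    intro k y
    have h : s k = ⨆ y, v k y := by rw [hsdef]
    rw [h]
    exact le_ciSup (f := v k) (Set.Finite.bddAbove (Set.finite_range _)) y
  have hs0 : ∀ k, 0 ≤ s k := fun k =>
    le_trans (hv0 k (Classical.arbitrary Y)) (hvs k _)
  have hvsum : ∀ k, q k ≠ 0 → ∑ y, v k y = 1 := fun k hk => sum_cprEvt T hk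
  have hprT : ∀ y, prEvt p {ω | T ω = y} ≤ P := by
    intro y
    rw [hPdef]
    exact le_ciSup (f := fun y => prEvt p {ω | T ω = y})
      (Set.Finite.bddAbove (Set.finite_range _)) y
  have hprTsum : ∑ y, prEvt p {ω | T ω = y} = 1 := by rw [sum_prEvt_fiber p T, hsum]
  have hcardY : (0 : ℝ) < (Fintype.card Y : ℝ) := by
    simpa using (Nat.cast_pos (α := ℝ)).mpr (Fintype.card_pos (α := Y))
  have hPpos : 0 < P := by
    have h1 : (1 : ℝ) ≤ (Fintype.card Y : ℝ) * P := by
      calc (1 : ℝ) = ∑ y, prEvt p {ω | T ω = y} := hprTsum.symm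
        _ ≤ ∑ _y : Y, P := Finset.sum_le_sum fun y _ => hprT y
        _ = (Fintype.card Y : ℝ) * P := by
            rw [Finset.sum_const, nsmul_eq_mul]; rfl
    nlinarith
  have hsk_lb : ∀ k, q k ≠ 0 → (Fintype.card Y : ℝ)⁻¹ ≤ s k := by
    intro k hk
    have h1 : (1 : ℝ) ≤ (Fintype.card Y : ℝ) * s k := by
      calc (1 : ℝ) = ∑ y, v k y := (hvsum k hk).symm
        _ ≤ ∑ _y : Y, s k := Finset.sum_le_sum fun y _ => hvs k y
        _ = (Fintype.card Y : ℝ) * s k := by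
            rw [Finset.sum_const, nsmul_eq_mul]; rfl
    rw [inv_le_iff_one_le_mul₀ hcardY]
    linarith
  have hSpos : 0 < S := by
    have h1 : ∑ k, q k * (Fintype.card Y : ℝ)⁻¹ ≤ S := by
      rw [hSdef]
      refine Finset.sum_le_sum fun k _ => ?_
      by_cases hk : q k = 0
      · simp [hk]
      · exact mul_le_mul_of_nonneg_left (hsk_lb k hk) (hq0 k)
    have h2 : ∑ k, q k * (Fintype.card Y : ℝ)⁻¹ = (Fintype.card Y : ℝ)⁻¹ := by
      rw [← Finset.sum_mul, hqsum, one_mul]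
    have := inv_pos.mpr hcardY
    linarith
  -- upper bound S ≤ 2^c * P
  have hS_ub : S ≤ (2 : ℝ) ^ c * P := by
    have hterm : ∀ k, q k ≠ 0 → q k * s k ≤ P := by
      intro k hk
      have hqk : 0 < q k := lt_of_le_of_ne (hq0 k) (Ne.symm hk)
      have hskP : s k ≤ P / q k := by
        refine ciSup_le fun y => ?_
        rw [le_div_iff₀ hqk]
        have : v k y * q k = prEvt p ({ω | T ω = y} ∩ {ω | M ω = k}) := by
          rw [hvdef]; exact div_mul_cancel₀ _ hk
        rw [this]
        exact le_trans (prEvt_mono hp Set.inter_subset_left) (hprT y)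
      calc q k * s k ≤ q k * (P / q k) := mul_le_mul_of_nonneg_left hskP (hq0 k)
        _ = P := mul_div_cancel₀ _ hk
    have hsub : S = ∑ k ∈ Finset.univ.filter fun k : κ => q k ≠ 0, q k * s k := by
      rw [hSdef]
      rw [Finset.sum_filter_of_ne]
      intro k _ h
      by_contra hk
      exact h (by rw [hk, zero_mul])
    calc S = ∑ k ∈ Finset.univ.filter fun k : κ => q k ≠ 0, q k * s k := hsub
      _ ≤ ∑ _k ∈ Finset.univ.filter fun k : κ => q k ≠ 0, P :=
          Finset.sum_le_sum fun k hk => hterm k (by simpa using (Finset.mem_filter.mp hk).2)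
      _ = ((Finset.univ.filter fun k : κ => q k ≠ 0).card : ℝ) * P := by
          rw [Finset.sum_const, nsmul_eq_mul]
      _ ≤ (2 : ℝ) ^ c * P := mul_le_mul_of_nonneg_right hM hPpos.le
  -- entropies
  have havg : avgMinEnt p T M = - Real.logb 2 S := rfl
  have hmin : minEnt p T = - Real.logb 2 P := rfl
  have h2pos : (0:ℝ) < 2 := two_pos
  have h2ne1 : (2:ℝ) ≠ 1 := by norm_num
  have hrw : (2 : ℝ) ^ (-(avgMinEnt p T M) / 2) = Real.sqrt S := by
    have hhalf : Real.logb 2 S / 2 = Real.logb 2 S * (1 / 2) := by ring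
    rw [havg, neg_neg, hhalf, Real.rpow_mul (by norm_num : (0:ℝ) ≤ 2),
      Real.rpow_logb h2pos h2ne1 hSpos, Real.sqrt_eq_rpow]
  have hCnn : 0 ≤ n ^ (-(1 / 2 : ℝ)) * specNorm A :=
    mul_nonneg (Real.rpow_nonneg hnpos.le _) (specNorm_nonneg A)
  constructor
  · -- main bound
    have hkey : ∀ k, q k * (n⁻¹ * ∑ x : X, |∑ y : Y, v k y * A x y|)
        ≤ q k * (n ^ (-(1 / 2 : ℝ)) * specNorm A * Real.sqrt (s k)) := by
      intro k
      by_cases hk : q k = 0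
      · simp [hk]
      refine mul_le_mul_of_nonneg_left ?_ (hq0 k)
      -- ℓ1-ℓ2 + spectral norm + entropy bound
      have step1 : ∑ x : X, |∑ y : Y, v k y * A x y|
          ≤ Real.sqrt n * Real.sqrt (∑ x : X, (∑ y : Y, v k y * A x y) ^ 2) := by
        have := Real.sum_mul_le_sqrt_mul_sqrt Finset.univ (fun _ : X => (1:ℝ))
          (fun x => |∑ y : Y, v k y * A x y|)
        simpa [sq_abs, hn] using this
      have step2 : Real.sqrt (∑ x : X, (∑ y : Y, v k y * A x y) ^ 2)
          ≤ specNorm A * Real.sqrt (∑ y : Y, (v k y) ^ 2) := specNorm_bound A (v k)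
      have step3 : Real.sqrt (∑ y : Y, (v k y) ^ 2) ≤ Real.sqrt (s k) := by
        refine Real.sqrt_le_sqrt ?_
        calc ∑ y : Y, (v k y) ^ 2 ≤ ∑ y : Y, s k * v k y :=
            Finset.sum_le_sum fun y _ => by
              rw [sq]; exact mul_le_mul_of_nonneg_right (hvs k y) (hv0 k y)
          _ = s k := by rw [← Finset.mul_sum, hvsum k hk, mul_one]
      have chain : ∑ x : X, |∑ y : Y, v k y * A x y|
          ≤ Real.sqrt n * (specNorm A * Real.sqrt (s k)) :=
        step1.trans (mul_le_mul_of_nonneg_left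
          (step2.trans (mul_le_mul_of_nonneg_left step3 (specNorm_nonneg A)))
          (Real.sqrt_nonneg n))
      have hninv : n⁻¹ * Real.sqrt n = n ^ (-(1 / 2 : ℝ)) := by
        rw [Real.sqrt_eq_rpow, ← Real.rpow_neg_one n, ← Real.rpow_add hnpos]
        norm_num
      calc n⁻¹ * ∑ x : X, |∑ y : Y, v k y * A x y|
          ≤ n⁻¹ * (Real.sqrt n * (specNorm A * Real.sqrt (s k))) :=
            mul_le_mul_of_nonneg_left chain (by positivity)
        _ = n ^ (-(1 / 2 : ℝ)) * specNorm A * Real.sqrt (s k) := by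
            rw [← mul_assoc, ← mul_assoc, hninv]
    have hjensen : ∑ k, q k * Real.sqrt (s k) ≤ Real.sqrt S := by
      have h1 : ∀ k, q k * Real.sqrt (s k) = Real.sqrt (q k) * Real.sqrt (q k * s k) := by
        intro k
        rw [Real.sqrt_mul (hq0 k), ← mul_assoc, Real.mul_self_sqrt (hq0 k)]
      calc ∑ k, q k * Real.sqrt (s k)
          = ∑ k, Real.sqrt (q k) * Real.sqrt (q k * s k) :=
            Finset.sum_congr rfl fun k _ => h1 k
        _ ≤ Real.sqrt (∑ k, q k) * Real.sqrt (∑ k, q k * s k) :=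
            Real.sum_sqrt_mul_sqrt_le _ hq0 (fun k => mul_nonneg (hq0 k) (hs0 k))
        _ = Real.sqrt S := by rw [hqsum, Real.sqrt_one, one_mul, hSdef]
    calc ∑ k : κ, q k * (n⁻¹ * ∑ x : X, |∑ y : Y, v k y * A x y|)
        ≤ ∑ k : κ, q k * (n ^ (-(1 / 2 : ℝ)) * specNorm A * Real.sqrt (s k)) :=
          Finset.sum_le_sum fun k _ => hkey k
      _ = (n ^ (-(1 / 2 : ℝ)) * specNorm A) * ∑ k, q k * Real.sqrt (s k) := by
          rw [Finset.mul_sum]; exact Finset.sum_congr rfl fun k _ => by ring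
      _ ≤ (n ^ (-(1 / 2 : ℝ)) * specNorm A) * Real.sqrt S :=
          mul_le_mul_of_nonneg_left hjensen hCnn
      _ = n ^ (-(1 / 2 : ℝ)) * specNorm A * (2 : ℝ) ^ (-(avgMinEnt p T M) / 2) := by
          rw [hrw]
  · -- second inequality
    refine mul_le_mul_of_nonneg_left ?_ hCnn
    rw [Real.rpow_le_rpow_left_iff (by norm_num : (1:ℝ) < 2)]
    rw [havg, hmin, neg_neg]
    have hlogb : Real.logb 2 S ≤ Real.logb 2 P + c := by
      have : Real.logb 2 ((2:ℝ) ^ c * P) = c + Real.logb 2 P := by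
        rw [Real.logb_mul (by positivity) hPpos.ne', Real.logb_rpow h2pos h2ne1]
      calc Real.logb 2 S ≤ Real.logb 2 ((2:ℝ) ^ c * P) :=
          Real.logb_le_logb_of_le (by norm_num) hSpos hS_ub
        _ = Real.logb 2 P + c := by rw [this]; ring
    linarith
end
end
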